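/- arXiv:1903.08214 — 4 statements merged into one kernel-verified Lean document; each statement's English description precedes it below -/
import Mathlib

section
/- For a Boolean function f : {0,1}^n → {0,1} and a relevant coordinate i, the influence of i satisfies Inf_i[f] ≥ 2^{1 - deg_i(f)}, where deg_i(f) is the maximal degree of a monomial containing x_i appearing with nonzero coefficient in the multilinear polynomial representing f. -/
open MvPolynomial Finset
open scoped Classical

/-- `bval` converts a boolean to the real number 0 or 1. -/
def bval (x : Bool) : ℝ := if x then 1 else 0

/-- `Represents P f` : `P` is the multilinear real polynomial representing the
Boolean function `f : {0,1}^n → {0,1}`. -/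
def Represents {n : ℕ} (P : MvPolynomial (Fin n) ℝ) (f : (Fin n → Bool) → Bool) : Prop :=
  (∀ m ∈ P.support, ∀ i, m i ≤ 1) ∧
  ∀ x : Fin n → Bool, MvPolynomial.eval (fun i => bval (x i)) P = bval (f x)

/-- Flip the `i`-th bit of `x`. -/
def flip1 {n : ℕ} (x : Fin n → Bool) (i : Fin n) : Fin n → Bool :=
  Function.update x i (!(x i))

/-- Coordinate `i` is relevant for `f`. -/
def Relevant {n : ℕ} (f : (Fin n → Bool) → Bool) (i : Fin n) : Prop :=
  ∃ x, f (flip1 x i) ≠ f x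

/-- The set of relevant coordinates of `f`. -/
noncomputable def relSet {n : ℕ} (f : (Fin n → Bool) → Bool) : Finset (Fin n) :=
  Finset.univ.filter fun i => Relevant f i

/-- The influence of coordinate `i` on `f`. -/
noncomputable def influence {n : ℕ} (f : (Fin n → Bool) → Bool) (i : Fin n) : ℝ :=
  ((Finset.univ.filter fun x => f (flip1 x i) ≠ f x).card : ℝ) / 2 ^ n

/-- `degI P i` : the maximal degree of a monomial of `P` containing `x i`. -/
noncomputable def degI {n : ℕ} (P : MvPolynomial (Fin n) ℝ) (i : Fin n) : ℕ :=
  (P.support.filter fun m => m i ≠ 0).sup fun m => m.sum fun _ e => e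

/-- `W P f = Σ_{i ∈ R(f)} 2^{-deg_i(f)}`, computed via the representing polynomial `P`. -/
noncomputable def W {n : ℕ} (P : MvPolynomial (Fin n) ℝ) (f : (Fin n → Bool) → Bool) : ℝ :=
  ∑ i ∈ relSet f, ((2:ℝ) ^ degI P i)⁻¹

/-- Flip the bits of `x` in the block `B`. -/
def flipB {n : ℕ} (x : Fin n → Bool) (B : Finset (Fin n)) : Fin n → Bool :=
  fun j => if j ∈ B then !(x j) else x j

/-- `f` has `b` pairwise disjoint sensitive blocks at some input. -/
def HasSensBlocks {n : ℕ} (f : (Fin n → Bool) → Bool) (b : ℕ) : Prop :=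
  ∃ (x : Fin n → Bool) (B : Fin b → Finset (Fin n)),
    (∀ j k, j ≠ k → Disjoint (B j) (B k)) ∧ ∀ j, f (flipB x (B j)) ≠ f x

/-- The block sensitivity of `f`. -/
noncomputable def bs {n : ℕ} (f : (Fin n → Bool) → Bool) : ℕ :=
  sSup {b | HasSensBlocks f b}

/-- Restriction of `f` fixing the coordinates in `H` according to `α`. -/
def restrict {n : ℕ} (f : (Fin n → Bool) → Bool) (H : Finset (Fin n)) (α : Fin n → Bool) :
    (Fin n → Bool) → Bool :=
  fun x => f fun i => if i ∈ H then α i else x i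

/-- The multilinear monomial (exponent vector) with support `S`. -/
noncomputable def monOf {n : ℕ} (S : Finset (Fin n)) : Fin n →₀ ℕ :=
  ∑ j ∈ S, Finsupp.single j 1

lemma alt_sum {n : ℕ} (P : MvPolynomial (Fin n) ℝ) (S : Finset (Fin n))
    (μ : Fin n →₀ ℕ) (hμS : μ.support = S)
    (hmax : ∀ m ∈ P.support, S ⊆ m.support → m = μ) (y : Fin n → ℝ) :
    ∑ U ∈ S.powerset, (-1:ℝ) ^ (S \ U).card *
      MvPolynomial.eval (fun j => if j ∈ S then (if j ∈ U then (1:ℝ) else 0) else y j) P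
      = P.coeff μ := by
  have key : ∀ m : Fin n →₀ ℕ,
      (∑ U ∈ S.powerset, (-1:ℝ) ^ (S \ U).card *
        (P.coeff m * ∏ j ∈ m.support,
          (if j ∈ S then (if j ∈ U then (1:ℝ) else 0) else y j) ^ m j))
      = (if S ⊆ m.support then P.coeff m * ∏ j ∈ m.support \ S, y j ^ m j else 0) := by
    intro m
    have step1 : ∀ U ∈ S.powerset, (-1:ℝ) ^ (S \ U).card *
        (P.coeff m * ∏ j ∈ m.support,
          (if j ∈ S then (if j ∈ U then (1:ℝ) else 0) else y j) ^ m j)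
        = (P.coeff m * ∏ j ∈ m.support \ S, y j ^ m j) *
          ((∏ j ∈ U, ((1:ℝ)) ^ m j) * ∏ j ∈ S \ U, (-((0:ℝ) ^ m j))) := by
      intro U hU
      have hUS : U ⊆ S := Finset.mem_powerset.mp hU
      have hsplit : (∏ j ∈ m.support,
          (if j ∈ S then (if j ∈ U then (1:ℝ) else 0) else y j) ^ m j)
          = (∏ j ∈ S, (if j ∈ S then (if j ∈ U then (1:ℝ) else 0) else y j) ^ m j)
            * ∏ j ∈ m.support \ S, y j ^ m j := by
        rw [← Finset.prod_inter_mul_prod_diff m.support S]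
        congr 1
        · rw [Finset.inter_comm]
          apply Finset.prod_subset Finset.inter_subset_left
          intro j hjS hj
          have hmj : m j = 0 := by
            by_contra h
            exact hj (Finset.mem_inter.mpr ⟨hjS, Finsupp.mem_support_iff.mpr h⟩)
          rw [hmj, pow_zero]
        · refine Finset.prod_congr rfl fun j hj => ?_
          rw [if_neg (Finset.mem_sdiff.mp hj).2]
      have hSU : (∏ j ∈ S, (if j ∈ S then (if j ∈ U then (1:ℝ) else 0) else y j) ^ m j)
          = (∏ j ∈ U, (1:ℝ) ^ m j) * ∏ j ∈ S \ U, (0:ℝ) ^ m j := by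
        calc (∏ j ∈ S, (if j ∈ S then (if j ∈ U then (1:ℝ) else 0) else y j) ^ m j)
            = ∏ j ∈ U ∪ S \ U, (if j ∈ S then (if j ∈ U then (1:ℝ) else 0) else y j) ^ m j := by
              rw [Finset.union_sdiff_of_subset hUS]
          _ = (∏ j ∈ U, (if j ∈ S then (if j ∈ U then (1:ℝ) else 0) else y j) ^ m j)
              * ∏ j ∈ S \ U, (if j ∈ S then (if j ∈ U then (1:ℝ) else 0) else y j) ^ m j :=
              Finset.prod_union Finset.disjoint_sdiff
          _ = (∏ j ∈ U, (1:ℝ) ^ m j) * ∏ j ∈ S \ U, (0:ℝ) ^ m j := by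
              congr 1
              · exact Finset.prod_congr rfl fun j hj => by rw [if_pos (hUS hj), if_pos hj]
              · refine Finset.prod_congr rfl fun j hj => ?_
                obtain ⟨hjS, hjU⟩ := Finset.mem_sdiff.mp hj
                rw [if_pos hjS, if_neg hjU]
      have hneg : ∏ j ∈ S \ U, (-((0:ℝ) ^ m j))
          = (-1:ℝ) ^ (S \ U).card * ∏ j ∈ S \ U, (0:ℝ) ^ m j := by
        rw [← Finset.prod_const, ← Finset.prod_mul_distrib]
        exact Finset.prod_congr rfl fun j _ => by ring
      rw [hsplit, hSU, hneg]
      ring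
    rw [Finset.sum_congr rfl step1, ← Finset.mul_sum, ← Finset.prod_add]
    by_cases hSm : S ⊆ m.support
    · rw [if_pos hSm]
      have h1 : ∏ j ∈ S, ((1:ℝ) ^ m j + -((0:ℝ) ^ m j)) = 1 := by
        apply Finset.prod_eq_one
        intro j hj
        have hmj : m j ≠ 0 := Finsupp.mem_support_iff.mp (hSm hj)
        rw [one_pow, zero_pow hmj]; ring
      rw [h1, mul_one]
    · rw [if_neg hSm]
      obtain ⟨j, hjS, hjm⟩ := Finset.not_subset.mp hSm
      have h0 : ∏ j ∈ S, ((1:ℝ) ^ m j + -((0:ℝ) ^ m j)) = 0 := by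
        apply Finset.prod_eq_zero hjS
        have hmj : m j = 0 := Finsupp.notMem_support_iff.mp hjm
        rw [hmj, pow_zero, pow_zero]; ring
      rw [h0, mul_zero]
  calc ∑ U ∈ S.powerset, (-1:ℝ) ^ (S \ U).card *
      MvPolynomial.eval (fun j => if j ∈ S then (if j ∈ U then (1:ℝ) else 0) else y j) P
      = ∑ U ∈ S.powerset, ∑ m ∈ P.support, (-1:ℝ) ^ (S \ U).card *
        (P.coeff m * ∏ j ∈ m.support,
          (if j ∈ S then (if j ∈ U then (1:ℝ) else 0) else y j) ^ m j) := by
        refine Finset.sum_congr rfl fun U _ => ?_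
        rw [MvPolynomial.eval_eq, Finset.mul_sum]
    _ = ∑ m ∈ P.support, ∑ U ∈ S.powerset, (-1:ℝ) ^ (S \ U).card *
        (P.coeff m * ∏ j ∈ m.support,
          (if j ∈ S then (if j ∈ U then (1:ℝ) else 0) else y j) ^ m j) := Finset.sum_comm
    _ = ∑ m ∈ P.support, (if S ⊆ m.support then P.coeff m * ∏ j ∈ m.support \ S, y j ^ m j else 0) :=
        Finset.sum_congr rfl fun m _ => key m
    _ = P.coeff μ := by
        rw [Finset.sum_eq_single μ]
        · rw [if_pos (hμS ▸ Finset.Subset.refl S), hμS, Finset.sdiff_self, Finset.prod_empty, mul_one]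
        · intro m hm hne
          rw [if_neg fun h => hne (hmax m hm h)]
        · intro hμ
          rw [MvPolynomial.notMem_support_iff.mp hμ]
          simp

lemma sum_pair {α β : Type*} [DecidableEq α] [AddCommMonoid β] {S : Finset α} {i : α} (hi : i ∈ S)
    (g : Finset α → β) :
    ∑ U ∈ S.powerset, g U = ∑ U ∈ (S.erase i).powerset, (g U + g (insert i U)) := by
  rw [Finset.sum_add_distrib, ← Finset.sum_powerset_insert (Finset.notMem_erase i S),
    Finset.insert_erase hi]

lemma card_filter_false {n : ℕ} (T : Finset (Fin n)) :
    (Finset.univ.filter fun x : Fin n → Bool => ∀ j ∈ T, x j = false).card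
      = 2 ^ (n - T.card) := by
  rw [show n - T.card = Tᶜ.card by rw [Finset.card_compl]; simp, ← Finset.card_powerset]
  apply Finset.card_bij' (fun x _ => Finset.univ.filter fun j => x j = true)
    (fun V _ => fun j => decide (j ∈ V))
  case hi =>
    intro x hx
    simp only [Finset.mem_filter, Finset.mem_univ, true_and] at hx
    rw [Finset.mem_powerset]
    intro j hj
    simp only [Finset.mem_filter, Finset.mem_univ, true_and] at hj
    rw [Finset.mem_compl]
    intro hjT
    rw [hx j hjT] at hj
    exact Bool.false_ne_true hj
  case hj =>
    intro V hV
    simp only [Finset.mem_filter, Finset.mem_univ, true_and]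
    intro j hj
    rw [Finset.mem_powerset] at hV
    simp only [decide_eq_false_iff_not]
    intro hjV
    exact (Finset.mem_compl.mp (hV hjV)) hj
  case left_inv =>
    intro x hx
    funext j
    by_cases h : x j <;> simp [h]
  case right_inv =>
    intro V hV
    ext j
    simp

lemma bval_inj {a b : Bool} (h : bval a = bval b) : a = b := by
  cases a <;> cases b <;> simp_all [bval]

lemma flip1_flip1 {n : ℕ} (x : Fin n → Bool) (i : Fin n) : flip1 (flip1 x i) i = x := by
  funext j
  by_cases h : j = i
  · subst h; simp [flip1]
  · simp [flip1, Function.update_of_ne h]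

lemma flip1_apply_ne {n : ℕ} (x : Fin n → Bool) {i j : Fin n} (h : j ≠ i) :
    flip1 x i j = x j := by simp [flip1, Function.update_of_ne h]

def zfun {n : ℕ} (x : Fin n → Bool) (S U : Finset (Fin n)) : Fin n → Bool :=
  fun j => if j ∈ S then (if j ∈ U then true else false) else x j

/-- for a relevant coordinate `i`, `Inf_i[f] ≥ 2^{1 - deg_i(f)}`. -/
theorem stmt_1 {n : ℕ} (f : (Fin n → Bool) → Bool) (P : MvPolynomial (Fin n) ℝ)
    (hP : Represents P f) (i : Fin n) (hi : Relevant f i) :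
    (2:ℝ) ^ (1 - (degI P i : ℤ)) ≤ influence f i := by
  classical
  obtain ⟨hmul, heval⟩ := hP
  have hex : ∃ m ∈ P.support, m i ≠ 0 := by
    by_contra hcon
    push_neg at hcon
    obtain ⟨x, hx⟩ := hi
    apply hx
    apply bval_inj
    rw [← heval (flip1 x i), ← heval x]
    rw [MvPolynomial.eval_eq, MvPolynomial.eval_eq]
    refine Finset.sum_congr rfl fun m hm => ?_
    congr 1
    refine Finset.prod_congr rfl fun j hj => ?_
    have hji : j ≠ i := by
      intro h
      exact Finsupp.mem_support_iff.mp hj (h ▸ hcon m hm)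
    rw [flip1_apply_ne x hji]
  set F := P.support.filter (fun m => m i ≠ 0) with hF
  have hFne : F.Nonempty := by
    obtain ⟨m, hm, hmi⟩ := hex
    exact ⟨m, Finset.mem_filter.mpr ⟨hm, hmi⟩⟩
  obtain ⟨μ, hμF, hμsum⟩ := @Finset.exists_mem_eq_sup ℕ (Fin n →₀ ℕ) _ _ F hFne (fun m => m.sum fun _ e => e)
  have hμP : μ ∈ P.support := (Finset.mem_filter.mp hμF).1
  have hμi : μ i ≠ 0 := (Finset.mem_filter.mp hμF).2
  set S := μ.support with hS
  set d := degI P i with hd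
  have hdsup : d = F.sup (fun m => m.sum fun _ e => e) := by rw [hd, degI, hF]
  have hone : ∀ m ∈ P.support, ∀ j ∈ m.support, m j = 1 := fun m hm j hj =>
    le_antisymm (hmul m hm j) (Nat.one_le_iff_ne_zero.mpr (Finsupp.mem_support_iff.mp hj))
  have hsumcard : ∀ m ∈ P.support, (m.sum fun _ e => e) = m.support.card := by
    intro m hm
    rw [Finsupp.sum, Finset.card_eq_sum_ones]
    exact Finset.sum_congr rfl fun j hj => hone m hm j hj
  have hiS : i ∈ S := Finsupp.mem_support_iff.mpr hμi
  have hdcard : d = S.card := by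
    rw [hdsup, hμsum, hsumcard μ hμP]
  have hd1 : 1 ≤ d := by rw [hdcard]; exact Finset.card_pos.mpr ⟨i, hiS⟩
  have hdn : d ≤ n := by
    rw [hdcard]
    calc S.card ≤ (Finset.univ : Finset (Fin n)).card :=
          Finset.card_le_card (Finset.subset_univ S)
      _ = n := Finset.card_fin n
  have hmax : ∀ m ∈ P.support, S ⊆ m.support → m = μ := by
    intro m hm hSm
    have hmi : m i ≠ 0 := Finsupp.mem_support_iff.mp (hSm hiS)
    have hle : (m.sum fun _ e => e) ≤ d := by
      rw [hdsup]
      exact Finset.le_sup (f := fun m : Fin n →₀ ℕ => m.sum fun _ e => e) (Finset.mem_filter.mpr ⟨hm, hmi⟩)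
    have hcard : m.support.card ≤ S.card := by
      rw [← hsumcard m hm, ← hdcard]; exact hle
    have hEq : S = m.support := Finset.eq_of_subset_of_card_le hSm hcard
    ext j
    by_cases hj : j ∈ S
    · rw [hone m hm j (hEq ▸ hj), hone μ hμP j hj]
    · have h1 : j ∉ m.support := fun h => hj (hEq ▸ h)
      have h2 : j ∉ μ.support := hj
      rw [Finsupp.notMem_support_iff.mp h1, Finsupp.notMem_support_iff.mp h2]
  have hc : P.coeff μ ≠ 0 := MvPolynomial.mem_support_iff.mp hμP
  have hsens : ∀ x : Fin n → Bool, ∃ U ∈ (S.erase i).powerset,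
      f (flip1 (zfun x S U) i) ≠ f (zfun x S U) := by
    intro x
    by_contra hcon
    push_neg at hcon
    have halt := alt_sum P S μ hS.symm hmax (fun j => bval (x j))
    rw [sum_pair hiS] at halt
    apply hc
    rw [← halt]
    apply Finset.sum_eq_zero
    intro U hU
    have hUS' : U ⊆ S.erase i := Finset.mem_powerset.mp hU
    have hiU : i ∉ U := fun h => (Finset.mem_erase.mp (hUS' h)).1 rfl
    have hpt : ∀ V : Finset (Fin n),
        (fun j => if j ∈ S then (if j ∈ V then (1:ℝ) else 0) else bval (x j))
        = fun j => bval (zfun x S V j) := by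
      intro V
      funext j
      by_cases hjS : j ∈ S
      · by_cases hjV : j ∈ V <;> simp [zfun, bval, hjS, hjV]
      · simp [zfun, hjS]
    have hzflip : zfun x S (insert i U) = flip1 (zfun x S U) i := by
      funext j
      by_cases hji : j = i
      · subst hji
        simp [zfun, flip1, hiS, hiU]
      · rw [flip1_apply_ne _ hji]
        simp [zfun, Finset.mem_insert, hji]
    have heq : f (zfun x S (insert i U)) = f (zfun x S U) := by
      rw [hzflip]
      exact hcon U hU
    have hcards : (S \ U).card = (S \ insert i U).card + 1 := by
      have h1 : S \ insert i U = (S \ U).erase i := by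
        ext j
        simp only [Finset.mem_sdiff, Finset.mem_erase, Finset.mem_insert]
        tauto
      have h2 : i ∈ S \ U := Finset.mem_sdiff.mpr ⟨hiS, hiU⟩
      have h3 : 1 ≤ (S \ U).card := Finset.card_pos.mpr ⟨i, h2⟩
      rw [h1, Finset.card_erase_of_mem h2]
      omega
    rw [hpt U, hpt (insert i U), heval, heval, heq, hcards, pow_succ]
    ring
  choose Uof hUof hUsens using hsens
  set A := Finset.univ.filter (fun x => f (flip1 x i) ≠ f x) with hA
  have hzA : ∀ x, zfun x S (Uof x) ∈ A := fun x =>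
    Finset.mem_filter.mpr ⟨Finset.mem_univ _, hUsens x⟩
  have hflipA : ∀ x ∈ A, flip1 x i ∈ A := by
    intro x hx
    rw [hA, Finset.mem_filter] at hx ⊢
    refine ⟨Finset.mem_univ _, ?_⟩
    rw [flip1_flip1]
    exact fun h => hx.2 h.symm
  have hzi : ∀ x, zfun x S (Uof x) i = false := by
    intro x
    have hiU : i ∉ Uof x := fun h =>
      (Finset.mem_erase.mp ((Finset.mem_powerset.mp (hUof x)) h)).1 rfl
    simp [zfun, hiS, hiU]
  have hzout : ∀ x, ∀ j, j ∉ S → zfun x S (Uof x) j = x j := by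
    intro x j hj; simp [zfun, hj]
  set w : (Fin n → Bool) → (Fin n → Bool) :=
    fun x => if x i then flip1 (zfun x S (Uof x)) i else zfun x S (Uof x) with hw
  have hwA : ∀ x, w x ∈ A := by
    intro x
    by_cases h : x i
    · simp only [hw, h, if_true]
      exact hflipA _ (hzA x)
    · simp only [hw, h, if_false]
      exact hzA x
  have hwi : ∀ x, w x i = x i := by
    intro x
    by_cases h : x i
    · simp [hw, h, flip1, hzi x]
    · simp [hw, h, hzi x]
  have hwout : ∀ x, ∀ j, j ∉ S → w x j = x j := by
    intro x j hj
    have hji : j ≠ i := fun h => hj (h ▸ hiS)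
    by_cases h : x i
    · simp only [hw, h, if_true]
      rw [flip1_apply_ne _ hji, hzout x j hj]
    · simp only [hw, h, if_false, Bool.false_eq_true]
      exact hzout x j hj
  set C := Finset.univ.filter (fun x : Fin n → Bool => ∀ j ∈ S.erase i, x j = false) with hC
  have hinj : Set.InjOn w ↑C := by
    intro x hx x' hx' hww
    rw [Finset.mem_coe, hC, Finset.mem_filter] at hx hx'
    funext j
    by_cases hjS : j ∈ S
    · by_cases hji : j = i
      · subst hji
        rw [← hwi x, ← hwi x', hww]
      · rw [hx.2 j (Finset.mem_erase.mpr ⟨hji, hjS⟩), hx'.2 j (Finset.mem_erase.mpr ⟨hji, hjS⟩)]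
    · rw [← hwout x j hjS, ← hwout x' j hjS, hww]
  have hcardle : C.card ≤ A.card := Finset.card_le_card_of_injOn w (fun x _ => hwA x) hinj
  have hCcard : C.card = 2 ^ (n + 1 - d) := by
    rw [hC, card_filter_false, Finset.card_erase_of_mem hiS, ← hdcard]
    congr 1
    omega
  have hAcard : (2:ℝ) ^ (n + 1 - d) ≤ (A.card : ℝ) := by
    have h := hCcard ▸ hcardle
    exact_mod_cast h
  have hinfl : influence f i = (A.card : ℝ) / 2 ^ n := rfl
  rw [hinfl, le_div_iff₀ (by positivity : (0:ℝ) < 2 ^ n)]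
  calc (2:ℝ) ^ (1 - (d:ℤ)) * 2 ^ n = (2:ℝ) ^ (n + 1 - d) := by
        rw [← zpow_natCast (2:ℝ) n, ← zpow_add₀ (by norm_num : (2:ℝ) ≠ 0),
          ← zpow_natCast (2:ℝ) (n + 1 - d)]
        congr 1
        omega
    _ ≤ (A.card : ℝ) := hAcard
end

section
/- If there exists a Boolean function f : {0,1}^n → {0,1} of degree d with block sensitivity b, then there exists g : {0,1}^b → {0,1} of degree at most d with g(0) = 0 and g(e_i) = 1 for every standard basis vector e_i. -/
open MvPolynomial Finset
open scoped Classical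

lemma bval_pow (c : Bool) {k : ℕ} (hk : k ≠ 0) : bval c ^ k = bval c := by
  cases c <;> simp [bval, zero_pow hk]

lemma monOf_apply {b : ℕ} (S : Finset (Fin b)) (i : Fin b) :
    monOf S i = if i ∈ S then 1 else 0 := by
  classical
  simp only [monOf, Finsupp.finset_sum_apply, Finsupp.single_apply]
  simp [Finset.sum_ite_eq S i]

lemma monOf_degsum {b : ℕ} (S : Finset (Fin b)) :
    ((monOf S).sum fun _ e => e) = S.card := by
  classical
  rw [monOf, ← Finsupp.sum_finset_sum_index (fun _ => rfl) (fun _ _ _ => rfl)]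
  simp [Finsupp.sum_single_index]

lemma monOf_prod {b : ℕ} (S : Finset (Fin b)) (w : Fin b → ℝ) :
    ((monOf S).prod fun i e => w i ^ e) = ∏ i ∈ S, w i := by
  classical
  rw [monOf, ← Finsupp.prod_finset_sum_index (fun _ => pow_zero _) (fun _ _ _ => pow_add _ _ _)]
  simp [Finsupp.prod_single_index]

lemma aeval_deg_le {n b : ℕ} (p : Fin n → MvPolynomial (Fin b) ℝ)
    (hp : ∀ j, (p j).totalDegree ≤ 1) (P : MvPolynomial (Fin n) ℝ) :
    (aeval p P).totalDegree ≤ P.totalDegree := by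
  rw [aeval_def, eval₂_eq, algebraMap_eq]
  apply totalDegree_finsetSum_le
  intro m hm
  calc (C (coeff m P) * ∏ i ∈ m.support, p i ^ m i).totalDegree
      ≤ (C (coeff m P) : MvPolynomial (Fin b) ℝ).totalDegree
          + (∏ i ∈ m.support, p i ^ m i).totalDegree := totalDegree_mul _ _
    _ ≤ 0 + ∑ i ∈ m.support, (p i ^ m i).totalDegree :=
        add_le_add (le_of_eq (totalDegree_C _)) (totalDegree_finset_prod _ _)
    _ ≤ ∑ i ∈ m.support, m i := by
        rw [zero_add]
        refine Finset.sum_le_sum fun i _ => ?_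
        calc (p i ^ m i).totalDegree ≤ m i * (p i).totalDegree := totalDegree_pow _ _
          _ ≤ m i * 1 := Nat.mul_le_mul_left _ (hp i)
          _ = m i := Nat.mul_one _
    _ = m.sum fun _ e => e := rfl
    _ ≤ P.totalDegree := le_totalDegree hm

lemma eval_aeval' {n b : ℕ} (p : Fin n → MvPolynomial (Fin b) ℝ)
    (P : MvPolynomial (Fin n) ℝ) (w : Fin b → ℝ) :
    eval w (aeval p P) = eval (fun j => eval w (p j)) P := by
  rw [aeval_def, algebraMap_eq, eval₂_comp_left]
  have : (eval w).comp (C : ℝ →+* MvPolynomial (Fin b) ℝ) = RingHom.id ℝ := by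
    ext r; simp
  rw [this]
  rfl

/-- if `f` has degree `d` and block sensitivity `b`, then there exists
`g : {0,1}^b → {0,1}` of degree at most `d` with `g(0) = 0` and `g(e_i) = 1` for all `i`. -/
theorem stmt_7 {n : ℕ} (f : (Fin n → Bool) → Bool) (P : MvPolynomial (Fin n) ℝ)
    (hP : Represents P f) (d b : ℕ) (hd : P.totalDegree = d) (hb : bs f = b) :
    ∃ (g : (Fin b → Bool) → Bool) (Q : MvPolynomial (Fin b) ℝ),
      Represents Q g ∧ Q.totalDegree ≤ d ∧
      g (fun _ => false) = false ∧
      ∀ i : Fin b, g (fun j => if j = i then true else false) = true := by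
  classical
  -- Step 1: extract b disjoint sensitive blocks
  have h0 : HasSensBlocks f 0 :=
    ⟨fun _ => false, fun i => i.elim0, fun j => j.elim0, fun j => j.elim0⟩
  have hbdd : BddAbove {b | HasSensBlocks f b} := by
    refine ⟨n, fun m hm => ?_⟩
    obtain ⟨x, B, hdisj, hsens⟩ := hm
    have hne : ∀ j, (B j).Nonempty := by
      intro j
      rcases Finset.eq_empty_or_nonempty (B j) with h | h
      · exfalso
        apply hsens j
        congr 1
        funext k
        simp [flipB, h]
      · exact h
    have hinj : Function.Injective fun j => (hne j).choose := by
      intro j k hjk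
      by_contra hne'
      have h2 : (hne j).choose ∈ B k := by
        rw [show (hne j).choose = (hne k).choose from hjk]
        exact (hne k).choose_spec
      exact (Finset.disjoint_left.mp (hdisj j k hne') ((hne j).choose_spec)) h2
    simpa using Fintype.card_le_of_injective _ hinj
  have hmemb : HasSensBlocks f b := by
    rw [← hb]
    exact Nat.sSup_mem (Set.nonempty_of_mem (show (0:ℕ) ∈ {b | HasSensBlocks f b} from h0)) hbdd
  obtain ⟨x, B, hdisj, hsens⟩ := hmemb
  have huniq : ∀ {j : Fin n} {i i' : Fin b}, j ∈ B i → j ∈ B i' → i = i' := by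
    intro j i i' h1 h2
    by_contra hne
    exact (Finset.disjoint_left.mp (hdisj i i' hne) h1) h2
  -- Step 2: the substitution
  set F : (Fin b → Bool) → Fin n → Bool :=
    fun y j => if h : ∃ i, j ∈ B i then (if y h.choose then !(x j) else x j) else x j with hF
  set p : Fin n → MvPolynomial (Fin b) ℝ :=
    fun j => if h : ∃ i, j ∈ B i then (if x j then 1 - X h.choose else X h.choose)
             else C (bval (x j)) with hp
  have hpeval : ∀ (y : Fin b → Bool) (j : Fin n),
      eval (fun i => bval (y i)) (p j) = bval (F y j) := by
    intro y j
    by_cases h : ∃ i, j ∈ B i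
    · simp only [hp, hF, dif_pos h]
      cases hx : x j <;> cases hy : y h.choose <;> simp [bval, hx, hy]
    · simp [hp, hF, dif_neg h]
  have hpdeg : ∀ j, (p j).totalDegree ≤ 1 := by
    intro j
    by_cases h : ∃ i, j ∈ B i
    · simp only [hp, dif_pos h]
      cases hx : x j
      · simp [totalDegree_X]
      · simp only [if_true]
        refine (totalDegree_sub _ _).trans ?_
        simp [totalDegree_X]
    · simp [hp, dif_neg h, totalDegree_C]
  have hF0 : F (fun _ => false) = x := by
    funext j
    by_cases h : ∃ i, j ∈ B i <;> simp [hF, h]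
  have hFe : ∀ i : Fin b, F (fun j => if j = i then true else false) = flipB x (B i) := by
    intro i
    funext j
    by_cases h : ∃ i', j ∈ B i'
    · have hc := h.choose_spec
      by_cases hji : j ∈ B i
      · have hci : h.choose = i := huniq hc hji
        simp [hF, flipB, h, hci, hji]
      · have hci : h.choose ≠ i := fun e => hji (e ▸ hc)
        simp [hF, flipB, h, hci, hji]
    · have hji : j ∉ B i := fun hm => h ⟨i, hm⟩
      simp [hF, flipB, h, hji]
  -- Step 3: the polynomial Q'' representing g on the cube (not yet multilinear)
  set g : (Fin b → Bool) → Bool := fun y => f (F y) != f x with hg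
  set Q' : MvPolynomial (Fin b) ℝ := aeval p P with hQ'
  have hQ'eval : ∀ y : Fin b → Bool,
      eval (fun i => bval (y i)) Q' = bval (f (F y)) := by
    intro y
    rw [hQ', eval_aeval']
    have : (fun j => eval (fun i => bval (y i)) (p j)) = fun j => bval (F y j) := by
      funext j; exact hpeval y j
    rw [this]
    exact hP.2 (F y)
  have hQ'deg : Q'.totalDegree ≤ d := hd ▸ aeval_deg_le p hpdeg P
  set Q'' : MvPolynomial (Fin b) ℝ := if f x then 1 - Q' else Q' with hQ''
  have hQ''deg : Q''.totalDegree ≤ d := by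
    rw [hQ'']
    by_cases hfx : f x
    · simp only [if_pos hfx]
      refine (totalDegree_sub _ _).trans (max_le ?_ hQ'deg)
      simp
    · simpa [if_neg hfx] using hQ'deg
  have hQ''eval : ∀ y : Fin b → Bool,
      eval (fun i => bval (y i)) Q'' = bval (g y) := by
    intro y
    have h' := hQ'eval y
    rw [hQ'']
    by_cases hfx : f x = true
    · rw [if_pos hfx, map_sub, map_one, h']
      cases hfy : f (F y) <;> simp [hg, hfx, hfy, bval]
    · rw [if_neg hfx, h']
      cases hfy : f (F y) <;> simp [hg, eq_false_of_ne_true hfx, hfy, bval]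
  -- Step 4: multilinearize
  set Q : MvPolynomial (Fin b) ℝ :=
    ∑ m ∈ Q''.support, monomial (monOf m.support) (Q''.coeff m) with hQ
  have hQsupp : ∀ m' ∈ Q.support, ∃ m ∈ Q''.support, m' = monOf m.support := by
    intro m' hm'
    rw [hQ] at hm'
    have := MvPolynomial.support_sum hm'
    obtain ⟨m, hm, hmem⟩ := Finset.mem_biUnion.mp this
    refine ⟨m, hm, ?_⟩
    by_cases hc : Q''.coeff m = 0
    · simp [support_monomial, hc] at hmem
    · simp [support_monomial, hc] at hmem
      exact hmem
  have hQml : ∀ m' ∈ Q.support, ∀ i, m' i ≤ 1 := by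
    intro m' hm' i
    obtain ⟨m, _, rfl⟩ := hQsupp m' hm'
    rw [monOf_apply]
    split <;> simp
  have hQdeg : Q.totalDegree ≤ d := by
    refine Finset.sup_le fun m' hm' => ?_
    obtain ⟨m, hm, rfl⟩ := hQsupp m' hm'
    rw [monOf_degsum]
    calc m.support.card ≤ m.sum fun _ e => e := by
          rw [Finsupp.sum]
          simpa using Finset.card_nsmul_le_sum m.support (fun i => m i) 1
            (fun i hi => Nat.one_le_iff_ne_zero.mpr (Finsupp.mem_support_iff.mp hi))
      _ ≤ Q''.totalDegree := le_totalDegree hm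
      _ ≤ d := hQ''deg
  have hQeval : ∀ y : Fin b → Bool,
      eval (fun i => bval (y i)) Q = bval (g y) := by
    intro y
    rw [← hQ''eval y, hQ, map_sum, eval_eq (fun i => bval (y i)) Q'']
    refine Finset.sum_congr rfl fun m hm => ?_
    rw [eval_monomial, monOf_prod]
    congr 1
    refine Finset.prod_congr rfl fun i hi => ?_
    exact (bval_pow (y i) (Finsupp.mem_support_iff.mp hi)).symm
  refine ⟨g, Q, ⟨hQml, hQeval⟩, hQdeg, ?_, ?_⟩
  · rw [hg]
    simp only [hF0]
    simp
  · intro i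
    rw [hg]
    simp only [hFe i]
    exact bne_iff_ne.mpr (hsens i)
end

section
/- If there exists a Boolean function f : {0,1}^n → {0,1} of degree d with block sensitivity b ≥ 1, then there exists τ ∈ {0,1} and a univariate real polynomial p of degree at most d with p(0) = 0, p(1) = 1, 0 ≤ p(k) ≤ 1 for all integers k with 2 ≤ k ≤ b−1, and p(b) = τ. -/
open MvPolynomial Finset
open scoped Classical

/-!
Fix an input `x` with `b` disjoint sensitive blocks `B j`. Replacing each variable `x i` with
`i ∈ B j` by the affine expression for `x i ⊕ y j` (and every other variable by its value at `x`)
turns the representing polynomial into a polynomial in `y ∈ {0,1}^b` of degree at most `d`; XOR-ing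
with `f x` makes its value at the indicator of `T` equal to
`f (x with the blocks of T flipped) ⊕ f x`. Averaging over `|T| = k` (Minsky–Papert
symmetrization) gives a univariate polynomial `p` of degree at most `d`: `p 0 = 0` since nothing is
flipped, `p 1 = 1` since every block is sensitive, `p k ∈ [0, 1]` as an average of bits, and `p b`
is a single bit.
-/

lemma bval_xor (a c : Bool) : bval (xor a c) = bval a + (1 - 2 * bval a) * bval c := by
  cases a <;> cases c <;> norm_num [bval]

lemma bval_eq_zero_or_eq_one (a : Bool) : bval a = 0 ∨ bval a = 1 := by
  cases a <;> simp [bval]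

lemma bval_mem_Icc (a : Bool) : bval a ∈ Set.Icc (0 : ℝ) 1 := by
  cases a <;> norm_num [bval]

lemma flipB_apply {n : ℕ} (x : Fin n → Bool) (S : Finset (Fin n)) (i : Fin n) :
    flipB x S i = xor (x i) (decide (i ∈ S)) := by
  by_cases h : i ∈ S <;> simp [flipB, h]

@[simp]
lemma flipB_empty {n : ℕ} (x : Fin n → Bool) : flipB x ∅ = x := by
  funext i; simp [flipB]

lemma HasSensBlocks.le {n b : ℕ} {f : (Fin n → Bool) → Bool} (h : HasSensBlocks f b) : b ≤ n := by
  obtain ⟨x, B, hdisj, hsens⟩ := h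
  have hne : ∀ j, (B j).Nonempty := fun j ↦
    Finset.nonempty_iff_ne_empty.2 fun hj ↦ hsens j (by rw [hj, flipB_empty])
  choose pt hpt using hne
  have hinj : Function.Injective pt := fun j k hjk ↦ by
    by_contra hne
    exact Finset.disjoint_left.1 (hdisj j k hne) (hpt j) (hjk ▸ hpt k)
  simpa using Fintype.card_le_of_injective pt hinj

lemma hasSensBlocks_bs {n : ℕ} (f : (Fin n → Bool) → Bool) : HasSensBlocks f (bs f) :=
  Nat.sSup_mem (s := {b | HasSensBlocks f b})
    ⟨0, fun _ ↦ false, Fin.elim0, fun j ↦ j.elim0, fun j ↦ j.elim0⟩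
    ⟨n, fun _ h ↦ HasSensBlocks.le h⟩

section Symmetrization

variable {σ : Type*}

noncomputable def cubePoint (T : Finset σ) : σ → ℝ := fun i ↦ if i ∈ T then 1 else 0

lemma eval_cubePoint_eq_sum (Q : MvPolynomial σ ℝ) (T : Finset σ) :
    eval (cubePoint T) Q = ∑ m ∈ Q.support, if m.support ⊆ T then coeff m Q else 0 := by
  rw [eval_eq]
  refine Finset.sum_congr rfl fun m _ ↦ ?_
  split_ifs with hm
  · rw [Finset.prod_eq_one fun i hi ↦ by simp [cubePoint, hm hi], mul_one]
  · obtain ⟨i, hi, hiT⟩ := Finset.not_subset.1 hm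
    rw [Finset.prod_eq_zero hi (by simp [cubePoint, hiT, Finsupp.mem_support_iff.1 hi]), mul_zero]

lemma card_support_le_degree (m : σ →₀ ℕ) : #m.support ≤ m.sum fun _ e ↦ e := by
  rw [Finset.card_eq_sum_ones, Finsupp.sum]
  exact Finset.sum_le_sum fun i hi ↦ Nat.one_le_iff_ne_zero.2 (Finsupp.mem_support_iff.1 hi)

variable [Fintype σ]

lemma choose_mul_descFactorial_card (S : Finset σ) (k : ℕ) :
    (Fintype.card σ).choose k * k.descFactorial #S
      = (#S).factorial * (Fintype.card σ).choose #S * #{T ∈ powersetCard k univ | S ⊆ T} := by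
  rcases le_or_gt #S k with hSk | hkS
  · rw [card_filter_powersetCard_subset S univ k (subset_univ S) hSk, card_univ,
      Nat.descFactorial_eq_factorial_mul_choose, mul_left_comm, Nat.choose_mul hSk, mul_assoc]
  · have hnone : {T ∈ powersetCard k (univ : Finset σ) | S ⊆ T} = ∅ :=
      Finset.filter_false_of_mem fun T hT hST ↦ by
        have := Finset.card_le_card hST
        rw [(Finset.mem_powersetCard.1 hT).2] at this
        omega
    rw [Nat.descFactorial_eq_zero_iff_lt.2 hkS, hnone, Finset.card_empty, mul_zero, mul_zero]

/-- On cube points the monomial with support `S` is the indicator of `S ⊆ T`, whose average over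
`#T = k` is `k.choose #S / (card σ).choose #S`, a polynomial in `k` of degree `#S`. -/
noncomputable def symmetrization (Q : MvPolynomial σ ℝ) : Polynomial ℝ :=
  ∑ m ∈ Q.support,
    Polynomial.C (coeff m Q / ((#m.support).factorial * (Fintype.card σ).choose #m.support))
      * descPochhammer ℝ #m.support

lemma natDegree_symmetrization_le (Q : MvPolynomial σ ℝ) :
    (symmetrization Q).natDegree ≤ Q.totalDegree := by
  refine Polynomial.natDegree_sum_le_of_forall_le _ _ fun m hm ↦ ?_
  calc _ ≤ (descPochhammer ℝ #m.support).natDegree := Polynomial.natDegree_C_mul_le _ _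
    _ = #m.support := descPochhammer_natDegree ℝ _
    _ ≤ m.sum fun _ e ↦ e := card_support_le_degree m
    _ ≤ Q.totalDegree := le_totalDegree hm

lemma choose_mul_eval_symmetrization (Q : MvPolynomial σ ℝ) (k : ℕ) :
    (Fintype.card σ).choose k * (symmetrization Q).eval (k : ℝ)
      = ∑ T ∈ powersetCard k univ, eval (cubePoint T) Q := by
  simp only [eval_cubePoint_eq_sum, symmetrization, Polynomial.eval_finsetSum, Finset.mul_sum]
  rw [Finset.sum_comm]
  refine Finset.sum_congr rfl fun m _ ↦ ?_
  rw [Finset.sum_ite, Finset.sum_const_zero, add_zero, Finset.sum_const, nsmul_eq_mul,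
    Polynomial.eval_mul, Polynomial.eval_C, descPochhammer_eval_eq_descFactorial]
  have hcount := congrArg (Nat.cast : ℕ → ℝ) (choose_mul_descFactorial_card m.support k)
  push_cast at hcount
  have hfact : ((#m.support).factorial : ℝ) ≠ 0 := by positivity
  have hchoose : ((Fintype.card σ).choose #m.support : ℝ) ≠ 0 :=
    Nat.cast_ne_zero.2 (Nat.choose_pos (Finset.card_le_univ _)).ne'
  field_simp
  linear_combination coeff m Q * hcount

lemma eval_symmetrization_of_forall (Q : MvPolynomial σ ℝ) {k : ℕ} (hk : k ≤ Fintype.card σ)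
    {c : ℝ} (h : ∀ T : Finset σ, #T = k → eval (cubePoint T) Q = c) :
    (symmetrization Q).eval (k : ℝ) = c := by
  have hsum := choose_mul_eval_symmetrization Q k
  rw [Finset.sum_congr rfl fun T hT ↦ h T (Finset.mem_powersetCard.1 hT).2, Finset.sum_const,
    Finset.card_powersetCard, Finset.card_univ, nsmul_eq_mul] at hsum
  exact mul_left_cancel₀ (Nat.cast_ne_zero.2 (Nat.choose_pos hk).ne') hsum

lemma eval_symmetrization_mem_Icc (Q : MvPolynomial σ ℝ) {k : ℕ} (hk : k ≤ Fintype.card σ)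
    (h : ∀ T : Finset σ, eval (cubePoint T) Q ∈ Set.Icc (0 : ℝ) 1) :
    (symmetrization Q).eval (k : ℝ) ∈ Set.Icc (0 : ℝ) 1 := by
  have hsum := choose_mul_eval_symmetrization Q k
  have hpos : (0 : ℝ) < (Fintype.card σ).choose k := Nat.cast_pos.2 (Nat.choose_pos hk)
  have hlow : 0 ≤ ∑ T ∈ powersetCard k univ, eval (cubePoint T) Q :=
    Finset.sum_nonneg fun T _ ↦ (h T).1
  have hhigh : ∑ T ∈ powersetCard k univ, eval (cubePoint T) Q ≤ (Fintype.card σ).choose k := by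
    simpa using Finset.sum_le_card_nsmul (powersetCard k univ) _ 1 fun T _ ↦ (h T).2
  constructor <;> nlinarith

end Symmetrization

section BlockRestriction

variable {σ τ : Type*}

noncomputable def xorConst (a : Bool) (q : MvPolynomial σ ℝ) : MvPolynomial σ ℝ :=
  C (bval a) + C (1 - 2 * bval a) * q

lemma totalDegree_xorConst_le (a : Bool) (q : MvPolynomial σ ℝ) :
    (xorConst a q).totalDegree ≤ q.totalDegree :=
  (totalDegree_add _ _).trans <| max_le (by rw [totalDegree_C]; exact Nat.zero_le _) <|
    (totalDegree_mul _ _).trans (by rw [totalDegree_C, zero_add])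

lemma eval_xorConst {a c : Bool} {q : MvPolynomial σ ℝ} {y : σ → ℝ} (h : eval y q = bval c) :
    eval y (xorConst a q) = bval (xor a c) := by
  simp [xorConst, h, bval_xor]

lemma totalDegree_bind₁_le (φ : σ → MvPolynomial τ ℝ) (hφ : ∀ i, (φ i).totalDegree ≤ 1)
    (P : MvPolynomial σ ℝ) : (bind₁ φ P).totalDegree ≤ P.totalDegree := by
  conv_lhs => rw [P.as_sum, map_sum]
  refine totalDegree_finsetSum_le fun m hm ↦ ?_
  rw [bind₁_monomial]
  calc _ ≤ (C (coeff m P) : MvPolynomial τ ℝ).totalDegree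
        + (∏ i ∈ m.support, φ i ^ m i).totalDegree := totalDegree_mul _ _
    _ ≤ 0 + ∑ i ∈ m.support, m i := by
        gcongr
        · exact (totalDegree_C _).le
        · refine (totalDegree_finsetProd _ _).trans (Finset.sum_le_sum fun i _ ↦ ?_)
          exact (totalDegree_pow _ _).trans (by simpa using Nat.mul_le_mul_left (m i) (hφ i))
    _ ≤ P.totalDegree := by simpa [Finsupp.sum] using le_totalDegree hm

lemma card_filter_mem_blocks [DecidableEq σ] {B : τ → Finset σ}
    (hB : Pairwise fun j k ↦ Disjoint (B j) (B k)) (T : Finset τ) (i : σ) :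
    #{j ∈ T | i ∈ B j} = if i ∈ T.biUnion B then 1 else 0 := by
  split_ifs with hi
  · obtain ⟨j, hj, hij⟩ := Finset.mem_biUnion.1 hi
    refine Finset.card_eq_one.2 ⟨j, Finset.eq_singleton_iff_unique_mem.2
      ⟨Finset.mem_filter.2 ⟨hj, hij⟩, fun k hk ↦ ?_⟩⟩
    by_contra hkj
    exact Finset.disjoint_left.1 (hB hkj) (Finset.mem_filter.1 hk).2 hij
  · exact Finset.card_eq_zero.2 <| Finset.filter_eq_empty_iff.2 fun j hj hij ↦
      hi (Finset.mem_biUnion.2 ⟨j, hj, hij⟩)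

variable [Fintype τ]

noncomputable def blockSubst {n : ℕ} (x : Fin n → Bool) (B : τ → Finset (Fin n)) (i : Fin n) :
    MvPolynomial τ ℝ :=
  xorConst (x i) (∑ j ∈ univ.filter (i ∈ B ·), X j)

lemma totalDegree_blockSubst_le {n : ℕ} (x : Fin n → Bool) (B : τ → Finset (Fin n)) (i : Fin n) :
    (blockSubst x B i).totalDegree ≤ 1 :=
  (totalDegree_xorConst_le _ _).trans <| totalDegree_finsetSum_le fun j _ ↦ by
    rw [totalDegree_X]

lemma eval_cubePoint_blockSubst {n : ℕ} (x : Fin n → Bool) {B : τ → Finset (Fin n)}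
    (hB : Pairwise fun j k ↦ Disjoint (B j) (B k)) (T : Finset τ) (i : Fin n) :
    eval (cubePoint T) (blockSubst x B i) = bval (flipB x (T.biUnion B) i) := by
  rw [flipB_apply]
  refine eval_xorConst ?_
  rw [map_sum]
  simp only [eval_X, cubePoint]
  have hfilter : ({j | i ∈ B j ∧ j ∈ T} : Finset τ) = {j ∈ T | i ∈ B j} := by
    ext; simp [and_comm]
  rw [Finset.sum_boole, Finset.filter_filter, hfilter, card_filter_mem_blocks hB]
  split_ifs with hi <;> simp [bval, hi]

lemma eval_cubePoint_bind₁_blockSubst {n : ℕ} (P : MvPolynomial (Fin n) ℝ) (x : Fin n → Bool)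
    {B : τ → Finset (Fin n)} (hB : Pairwise fun j k ↦ Disjoint (B j) (B k)) (T : Finset τ) :
    eval (cubePoint T) (bind₁ (blockSubst x B) P)
      = eval (fun i ↦ bval (flipB x (T.biUnion B) i)) P := by
  rw [eval, eval₂Hom_bind₁]
  exact congrArg (fun y ↦ eval y P) (funext (eval_cubePoint_blockSubst x hB T))

end BlockRestriction

/-- if `f` has degree `d` and block sensitivity `b ≥ 1`, then there exist
`τ ∈ {0,1}` and a univariate real polynomial `p` of degree at most `d` with `p(0) = 0`,
`p(1) = 1`, `0 ≤ p(k) ≤ 1` for integers `2 ≤ k ≤ b-1`, and `p(b) = τ`. -/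
theorem stmt_8 {n : ℕ} (f : (Fin n → Bool) → Bool) (P : MvPolynomial (Fin n) ℝ)
    (hP : Represents P f) (d b : ℕ) (hd : P.totalDegree = d)
    (hb1 : 1 ≤ b) (hb : bs f = b) :
    ∃ τ : ℝ, (τ = 0 ∨ τ = 1) ∧
      ∃ p : Polynomial ℝ, p.natDegree ≤ d ∧
        p.eval 0 = 0 ∧ p.eval 1 = 1 ∧
        (∀ k : ℕ, 2 ≤ k → k ≤ b - 1 → 0 ≤ p.eval (k:ℝ) ∧ p.eval (k:ℝ) ≤ 1) ∧
        p.eval (b:ℝ) = τ := by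
  obtain ⟨x, B, hB, hsens⟩ : HasSensBlocks f b := hb ▸ hasSensBlocks_bs f
  set G := xorConst (f x) (bind₁ (blockSubst x B) P)
  have hG (T : Finset (Fin b)) :
      eval (cubePoint T) G = bval (xor (f x) (f (flipB x (T.biUnion B)))) :=
    eval_xorConst (by rw [eval_cubePoint_bind₁_blockSubst P x hB, hP.2])
  have hlevel {k : ℕ} (hk : k ≤ b) {c : ℝ}
      (h : ∀ T : Finset (Fin b), #T = k → eval (cubePoint T) G = c) :
      (symmetrization G).eval (k : ℝ) = c :=
    eval_symmetrization_of_forall G (by rwa [Fintype.card_fin]) h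
  refine ⟨_, bval_eq_zero_or_eq_one (xor (f x) (f (flipB x (univ.biUnion B)))), symmetrization G,
    ?_, ?_, ?_, ?_, ?_⟩
  · calc _ ≤ G.totalDegree := natDegree_symmetrization_le G
      _ ≤ (bind₁ (blockSubst x B) P).totalDegree := totalDegree_xorConst_le _ _
      _ ≤ d := hd ▸ totalDegree_bind₁_le _ (totalDegree_blockSubst_le x B) P
  · simpa using hlevel (Nat.zero_le b) (c := 0) fun T hT ↦ by
      simp [hG, Finset.card_eq_zero.1 hT, bval]
  · simpa using hlevel hb1 (c := 1) fun T hT ↦ by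
      obtain ⟨j, rfl⟩ := Finset.card_eq_one.1 hT
      simp [hG, bval, (hsens j).symm]
  · intro k _ hk
    exact eval_symmetrization_mem_Icc G (by rw [Fintype.card_fin]; omega) fun T ↦
      hG T ▸ bval_mem_Icc _
  · exact hlevel le_rfl fun T hT ↦ by rw [Finset.eq_univ_of_card T (by simpa using hT), hG]
end

section
/- For any Boolean function f : {0,1}^n → {0,1}, W(f) ≤ Inf[f]/2 ≤ deg(f)/2, where W(f) = Σ_{i ∈ R(f)} 2^{−deg_i(f)}. -/
open MvPolynomial Finset
open scoped Classical

/-!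
Points of the cube are encoded by their sets of true coordinates, so that on them `P` becomes
the subset sum `U ↦ ∑ S ⊆ U, c S` of its multilinear coefficients `c`.

For a relevant `i`, the derivative `U ↦ f(U ∪ {i}) - f(U \ {i})` is again such a subset sum,
with a nonzero coefficient at some `T ∌ i` with `|T| < deg_i`; take `T` maximal. Fixing the
coordinates outside `T` in any way leaves a function on the subcube `2^T` whose coefficient at
`T` is unchanged (by maximality), and a minimal nonzero coefficient of such a function is one of
its values. So each of the `2^(n - |T|)` subcubes contains a sensitive point, and
`Inf_i ≥ 2^(1 - deg_i)`.

For the second inequality let `h = 1 - 2f`. Comparing Walsh coefficients of `h` and of its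
derivative, Parseval gives `Inf_i = ∑_{S ∋ i} ĥ(S)²`, hence `Inf = ∑_S |S| ĥ(S)²`. The
coefficients vanish for `|S| > deg`, and `∑_S ĥ(S)² = 1`, so `Inf ≤ deg`.
-/

open scoped symmDiff

section SubsetSums

variable {ι M : Type*}

theorem exists_sum_powerset_ne_zero [AddCommMonoid M] {d : Finset ι → M} {T : Finset ι}
    (hT : d T ≠ 0) : ∃ A ⊆ T, ∑ B ∈ A.powerset, d B ≠ 0 := by
  obtain ⟨A, hA, hmin⟩ :=
    exists_min_image {A ∈ T.powerset | d A ≠ 0} card ⟨T, by simp [hT]⟩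
  rw [mem_filter, mem_powerset] at hA
  refine ⟨A, hA.1, ?_⟩
  rw [sum_eq_single_of_mem A (mem_powerset_self A) fun B hBA hne => ?_]
  · exact hA.2
  by_contra hB
  have hBA : B ⊂ A := ssubset_of_subset_of_ne (mem_powerset.1 hBA) hne
  have := hmin B (mem_filter.2 ⟨mem_powerset.2 (hBA.subset.trans hA.1), hB⟩)
  exact this.not_gt (card_lt_card hBA)

variable [DecidableEq ι]

theorem exists_sum_powerset_union_ne_zero [AddCommMonoid M] {c : Finset ι → M}
    {T Z : Finset ι} (hT : c T ≠ 0) (hmax : ∀ S, T ⊂ S → c S = 0) (hZ : Disjoint Z T) :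
    ∃ w ⊆ T, ∑ S ∈ (w ∪ Z).powerset, c S ≠ 0 := by
  -- `d A` is the coefficient at `A` of the restriction to the subcube through `Z`.
  set d : Finset ι → M := fun A => ∑ S ∈ (A ∪ Z).powerset with S ∩ T = A, c S
  have hdT : d T = c T := by
    refine sum_eq_single_of_mem T
      (mem_filter.2 ⟨mem_powerset.2 subset_union_left, inter_self T⟩) fun S hS hne => hmax S ?_
    rw [mem_filter] at hS
    exact ssubset_of_subset_of_ne (hS.2 ▸ inter_subset_left) (Ne.symm hne)
  have hsplit : ∀ w ⊆ T, ∑ S ∈ (w ∪ Z).powerset, c S = ∑ A ∈ w.powerset, d A := by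
    intro w hw
    rw [← sum_fiberwise_of_maps_to (g := (· ∩ T)) (t := w.powerset)]
    · refine sum_congr rfl fun A hA => congrArg₂ _ (Finset.ext fun S => ?_) rfl
      simp only [mem_filter, mem_powerset] at hA ⊢
      constructor
      · rintro ⟨hS, rfl⟩
        refine ⟨fun x hx => ?_, rfl⟩
        by_cases hxT : x ∈ T
        · exact mem_union_left _ (mem_inter.2 ⟨hx, hxT⟩)
        · exact mem_union_right _
            ((mem_union.1 (hS hx)).resolve_left fun hxw => hxT (hw hxw))
      · rintro ⟨hS, rfl⟩
        exact ⟨hS.trans (union_subset_union hA subset_rfl), rfl⟩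
    · intro S hS
      rw [mem_powerset] at hS ⊢
      intro x hx
      rw [mem_inter] at hx
      exact (mem_union.1 (hS hx.1)).resolve_right fun hxZ => disjoint_left.1 hZ hxZ hx.2
  obtain ⟨w, hw, hne⟩ := exists_sum_powerset_ne_zero (hdT ▸ hT : d T ≠ 0)
  exact ⟨w, hw, hsplit w hw ▸ hne⟩

theorem two_pow_card_le_mul_card_sum_powerset_ne_zero [Fintype ι] {c : Finset ι → ℝ}
    {T : Finset ι} (hT : c T ≠ 0) (hmax : ∀ S, T ⊂ S → c S = 0) :
    2 ^ Fintype.card ι ≤ 2 ^ #T * #{U : Finset ι | ∑ S ∈ U.powerset, c S ≠ 0} := by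
  have hsub : ∀ Z ∈ Tᶜ.powerset, ∃ w ⊆ T, ∑ S ∈ (w ∪ Z).powerset, c S ≠ 0 := fun Z hZ =>
    exists_sum_powerset_union_ne_zero hT hmax
      (subset_compl_iff_disjoint_right.1 (mem_powerset.1 hZ))
  choose! w hwT hw using hsub
  have hinj : Set.InjOn (fun Z => w Z ∪ Z) Tᶜ.powerset := by
    intro Z hZ Z' hZ' h
    have hZT : ∀ Z ∈ Tᶜ.powerset, (w Z ∪ Z) \ T = Z := fun Z hZ => by
      rw [union_sdiff_distrib, sdiff_eq_empty_iff_subset.2 (hwT Z hZ), empty_union]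
      exact (subset_compl_iff_disjoint_right.1 (mem_powerset.1 hZ)).sdiff_eq_left
    rw [← hZT Z hZ, ← hZT Z' hZ']
    exact congrArg (· \ T) h
  calc 2 ^ Fintype.card ι = 2 ^ #T * #Tᶜ.powerset := by
        rw [card_powerset, ← pow_add, card_add_card_compl]
    _ ≤ 2 ^ #T * #{U : Finset ι | ∑ S ∈ U.powerset, c S ≠ 0} :=
        Nat.mul_le_mul_left _ (card_le_card_of_injOn (fun Z => w Z ∪ Z)
          (fun Z hZ => mem_filter.2 ⟨mem_univ _, hw Z hZ⟩) hinj)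

theorem sum_powerset_insert_sub_sum_powerset_erase [AddCommGroup M] (c : Finset ι → M)
    (i : ι) (U : Finset ι) :
    ∑ S ∈ (insert i U).powerset, c S - ∑ S ∈ (U.erase i).powerset, c S =
      ∑ S ∈ U.powerset, if i ∈ S then 0 else c (insert i S) := by
  have hU : insert i U = insert i (U.erase i) := by grind
  have hfilter : {S ∈ U.powerset | i ∉ S} = (U.erase i).powerset := by
    ext S; simp [subset_erase]
  rw [hU, sum_powerset_insert (notMem_erase i U), add_sub_cancel_left, sum_ite, sum_const_zero,
    zero_add, hfilter]

theorem Finset.apply_symmDiff_singleton_ne_iff {α : Type*} (F : Finset ι → α) (U : Finset ι)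
    (i : ι) : F (U ∆ {i}) ≠ F U ↔ F (insert i U) ≠ F (U.erase i) := by
  by_cases hi : i ∈ U
  · rw [insert_eq_of_mem hi, ne_comm, show U ∆ {i} = U.erase i by ext; grind [mem_symmDiff]]
  · rw [erase_eq_of_notMem hi, show U ∆ {i} = insert i U by ext; grind [mem_symmDiff]]

theorem exists_two_pow_le_mul_card_sensitive [Fintype ι] {F c : Finset ι → ℝ}
    (hF : ∀ U, F U = ∑ S ∈ U.powerset, c S) {i : ι} (hi : ∃ U, F (U ∆ {i}) ≠ F U) :
    ∃ T, i ∈ T ∧ c T ≠ 0 ∧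
      2 ^ (Fintype.card ι + 1) ≤ 2 ^ #T * #{U : Finset ι | F (U ∆ {i}) ≠ F U} := by
  set c' : Finset ι → ℝ := fun S => if i ∈ S then 0 else c (insert i S)
  have hsens : ∀ U, F (U ∆ {i}) ≠ F U ↔ ∑ S ∈ U.powerset, c' S ≠ 0 := fun U => by
    rw [Finset.apply_symmDiff_singleton_ne_iff, ← sub_ne_zero, hF, hF,
      sum_powerset_insert_sub_sum_powerset_erase]
  obtain ⟨U, hU⟩ := hi
  obtain ⟨S, -, hS⟩ := exists_ne_zero_of_sum_ne_zero ((hsens U).1 hU)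
  obtain ⟨T, hT, hmax⟩ := exists_max_image {S | c' S ≠ 0} card ⟨S, by simpa using hS⟩
  rw [mem_filter] at hT
  have hiT : i ∉ T := fun h => hT.2 (if_pos h)
  refine ⟨insert i T, mem_insert_self i T, fun h => hT.2 (by simp [c', hiT, h]), ?_⟩
  have hmax' : ∀ S, T ⊂ S → c' S = 0 := fun S hTS => by
    by_contra h
    exact (hmax S (by simpa using h)).not_gt (card_lt_card hTS)
  have := two_pow_card_le_mul_card_sum_powerset_ne_zero hT.2 hmax'
  rw [filter_congr fun U _ => (hsens U).symm] at this
  rw [card_insert_of_notMem hiT, pow_succ, pow_succ, mul_right_comm]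
  exact Nat.mul_le_mul_right 2 this

end SubsetSums

section Walsh
variable {ι : Type*} [DecidableEq ι]

def walsh (S U : Finset ι) : ℝ := (-1) ^ #(S ∩ U)

theorem walsh_comm (S U : Finset ι) : walsh S U = walsh U S := by
  rw [walsh, walsh, inter_comm]

theorem walsh_eq_prod (S U : Finset ι) : walsh S U = ∏ j ∈ S, if j ∈ U then -1 else 1 := by
  rw [prod_ite_mem, prod_const, walsh]

theorem walsh_symmDiff (S U V : Finset ι) : walsh S (U ∆ V) = walsh S U * walsh S V := by
  simp only [walsh_eq_prod, ← prod_mul_distrib, mem_symmDiff]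
  refine prod_congr rfl fun j _ => ?_
  by_cases hU : j ∈ U <;> by_cases hV : j ∈ V <;> simp [hU, hV]

theorem walsh_singleton (S : Finset ι) (i : ι) : walsh S {i} = if i ∈ S then -1 else 1 := by
  rw [walsh_comm, walsh_eq_prod, prod_singleton]

variable [Fintype ι]

theorem sum_comp_symmDiff_mul_walsh (g : Finset ι → ℝ) (S : Finset ι) (i : ι) :
    ∑ U, g (U ∆ {i}) * walsh S U = walsh S {i} * ∑ U, g U * walsh S U := by
  rw [mul_sum]
  refine Fintype.sum_bijective (· ∆ {i}) (symmDiff_left_involutive {i}).bijective _ _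
    fun U => ?_
  rw [walsh_symmDiff, walsh_singleton]
  split_ifs <;> ring

theorem sum_mul_walsh_eq_zero {g : Finset ι → ℝ} {S : Finset ι} {j : ι} (hj : j ∈ S)
    (hg : ∀ U, g (U ∆ {j}) = g U) : ∑ U, g U * walsh S U = 0 := by
  have := sum_comp_symmDiff_mul_walsh g S j
  simp only [hg, walsh_singleton, if_pos hj] at this
  linarith

theorem sum_walsh (S : Finset ι) :
    ∑ U, walsh S U = if S = ∅ then 2 ^ Fintype.card ι else 0 := by
  split_ifs with hS
  · simp [hS, walsh]
  · obtain ⟨j, hj⟩ := nonempty_iff_ne_empty.2 hS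
    simpa using sum_mul_walsh_eq_zero (g := fun _ => 1) hj fun _ => rfl

theorem sum_walsh_mul_walsh (U V : Finset ι) :
    ∑ S, walsh U S * walsh V S = if U = V then 2 ^ Fintype.card ι else 0 := by
  simp_rw [walsh_comm U, walsh_comm V, ← walsh_symmDiff, walsh_comm _ (U ∆ V), sum_walsh]
  simp [← bot_eq_empty]

noncomputable def walshCoeff (g : Finset ι → ℝ) (S : Finset ι) : ℝ :=
  (∑ U, g U * walsh S U) / 2 ^ Fintype.card ι

theorem sum_walshCoeff_mul_walsh (g : Finset ι → ℝ) (V : Finset ι) :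
    ∑ S, walshCoeff g S * walsh S V = g V := by
  calc ∑ S, walshCoeff g S * walsh S V
      = (∑ U, g U * ∑ S, walsh U S * walsh V S) / 2 ^ Fintype.card ι := by
        simp only [walshCoeff, div_mul_eq_mul_div, ← sum_div, sum_mul, mul_sum]
        rw [sum_comm]
        congr 1
        exact sum_congr rfl fun U _ => sum_congr rfl fun S _ => by
          rw [walsh_comm S U, walsh_comm S V]; ring
    _ = g V := by simp [sum_walsh_mul_walsh]

theorem sum_mul_walsh_eq (g : Finset ι → ℝ) (S : Finset ι) :
    ∑ U, g U * walsh S U = 2 ^ Fintype.card ι * walshCoeff g S := by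
  rw [walshCoeff, mul_div_cancel₀ _ (by positivity)]

theorem sum_sq_eq_two_pow_mul_sum_walshCoeff_sq (g : Finset ι → ℝ) :
    ∑ U, g U ^ 2 = 2 ^ Fintype.card ι * ∑ S, walshCoeff g S ^ 2 := by
  calc ∑ U, g U ^ 2 = ∑ U, g U * ∑ S, walshCoeff g S * walsh S U := by
        simp [sum_walshCoeff_mul_walsh, sq]
    _ = ∑ S, walshCoeff g S * ∑ U, g U * walsh S U := by
        simp only [mul_sum]
        rw [sum_comm]
        exact sum_congr rfl fun S _ => sum_congr rfl fun U _ => by ring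
    _ = 2 ^ Fintype.card ι * ∑ S, walshCoeff g S ^ 2 := by
        simp only [sum_mul_walsh_eq, mul_sum]
        exact sum_congr rfl fun S _ => by ring

end Walsh

section TotalInfluence
variable {ι : Type*} [DecidableEq ι] [Fintype ι]

theorem walshCoeff_half_sub_comp_symmDiff (g : Finset ι → ℝ) (i : ι) (S : Finset ι) :
    walshCoeff (fun U => (g U - g (U ∆ {i})) / 2) S = if i ∈ S then walshCoeff g S else 0 := by
  have hsum : ∑ U, (g U - g (U ∆ {i})) / 2 * walsh S U =
      (∑ U, g U * walsh S U - ∑ U, g (U ∆ {i}) * walsh S U) / 2 := by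
    rw [← sum_sub_distrib, sum_div]
    exact sum_congr rfl fun U _ => by ring
  rw [walshCoeff, hsum, sum_comp_symmDiff_mul_walsh, walsh_singleton, walshCoeff]
  split_ifs <;> ring

theorem card_sensitive_eq_of_sq_eq_one {h : Finset ι → ℝ} (hh : ∀ U, h U ^ 2 = 1) (i : ι) :
    (#{U | h (U ∆ {i}) ≠ h U} : ℝ) =
      2 ^ Fintype.card ι * ∑ S, if i ∈ S then walshCoeff h S ^ 2 else 0 := by
  have hind : ∀ U,
      (if h (U ∆ {i}) ≠ h U then (1 : ℝ) else 0) = ((h U - h (U ∆ {i})) / 2) ^ 2 := by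
    intro U
    split_ifs with hne
    · have : h (U ∆ {i}) = - h U :=
        (sq_eq_sq_iff_eq_or_eq_neg.1 (by rw [hh, hh])).resolve_left hne
      rw [this]; nlinarith [hh U]
    · push Not at hne; rw [hne]; ring
  rw [natCast_card_filter, sum_congr rfl fun U _ => hind U,
    sum_sq_eq_two_pow_mul_sum_walshCoeff_sq]
  simp_rw [walshCoeff_half_sub_comp_symmDiff, ite_pow, zero_pow two_ne_zero]

theorem sum_card_sensitive_le {h : Finset ι → ℝ} (hh : ∀ U, h U ^ 2 = 1) {d : ℕ}
    (hdeg : ∀ S, d < #S → walshCoeff h S = 0) :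
    ∑ i, (#{U | h (U ∆ {i}) ≠ h U} : ℝ) ≤ d * 2 ^ Fintype.card ι := by
  have hparseval : ∑ S, walshCoeff h S ^ 2 = 1 := by
    have := sum_sq_eq_two_pow_mul_sum_walshCoeff_sq h
    simp only [hh, sum_const, card_univ, Fintype.card_finset, nsmul_eq_mul, mul_one] at this
    push_cast at this
    exact (mul_eq_left₀ (by positivity)).1 this.symm
  calc ∑ i, (#{U | h (U ∆ {i}) ≠ h U} : ℝ)
      = 2 ^ Fintype.card ι * ∑ S, #S * walshCoeff h S ^ 2 := by
        simp_rw [card_sensitive_eq_of_sq_eq_one hh, ← mul_sum]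
        rw [sum_comm]
        simp_rw [sum_ite_mem, univ_inter, sum_const, nsmul_eq_mul]
    _ ≤ 2 ^ Fintype.card ι * ∑ S, d * walshCoeff h S ^ 2 := by
        refine mul_le_mul_of_nonneg_left (sum_le_sum fun S _ => ?_) (by positivity)
        rcases le_or_gt #S d with hS | hS
        · exact mul_le_mul_of_nonneg_right (by exact_mod_cast hS) (sq_nonneg _)
        · simp [hdeg S hS]
    _ = d * 2 ^ Fintype.card ι := by rw [← mul_sum, hparseval]; ring

theorem walshCoeff_eq_zero_of_card_lt {F c : Finset ι → ℝ}
    (hF : ∀ U, F U = ∑ T ∈ U.powerset, c T) {d : ℕ} (hc : ∀ T, d < #T → c T = 0)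
    {S : Finset ι} (hS : d < #S) : walshCoeff F S = 0 := by
  have hF' : ∀ U, F U = ∑ T, c T * if T ⊆ U then 1 else 0 := fun U => by
    simp_rw [hF, mul_ite, mul_one, mul_zero, ← sum_filter, filter_subset_univ]
  suffices ∑ U, F U * walsh S U = 0 by rw [walshCoeff, this, zero_div]
  simp_rw [hF', sum_mul]
  rw [sum_comm]
  refine sum_eq_zero fun T _ => ?_
  by_cases hT : d < #T
  · simp [hc T hT]
  obtain ⟨j, hjS, hjT⟩ := exists_mem_notMem_of_card_lt_card (hS.trans_le' (not_lt.1 hT))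
  simp_rw [mul_assoc, ← mul_sum]
  rw [sum_mul_walsh_eq_zero hjS fun U => ?_, mul_zero]
  have : T ⊆ U ∆ {j} ↔ T ⊆ U := by grind [mem_symmDiff]
  simp only [this]

end TotalInfluence

theorem Finsupp.card_support_le_sum {σ : Type*} (m : σ →₀ ℕ) :
    #m.support ≤ m.sum fun _ e => e := by
  rw [card_eq_sum_ones, Finsupp.sum]
  exact Finset.sum_le_sum fun j hj => Nat.one_le_iff_ne_zero.2 (Finsupp.mem_support_iff.1 hj)

section MultilinearCoeff
variable {σ R : Type*} [DecidableEq σ] [CommSemiring R]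

/-- Since `x ^ k = x` on `{0, 1}` for `k ≠ 0`, at the points of the cube `P` agrees with the
multilinear polynomial `∑ S, multilinearCoeff P S * ∏ j ∈ S, X j`. -/
def multilinearCoeff (P : MvPolynomial σ R) (S : Finset σ) : R :=
  ∑ m ∈ P.support with m.support = S, P.coeff m

theorem eval_indicator_eq_sum_multilinearCoeff (P : MvPolynomial σ R) (U : Finset σ) :
    eval (fun j => if j ∈ U then 1 else 0) P = ∑ S ∈ U.powerset, multilinearCoeff P S := by
  have hmon : ∀ m : σ →₀ ℕ, ∏ j ∈ m.support, (if j ∈ U then (1 : R) else 0) ^ m j =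
      if m.support ⊆ U then 1 else 0 := fun m => by
    rw [prod_congr rfl fun j hj => by
      rw [ite_pow, one_pow, zero_pow (Finsupp.mem_support_iff.1 hj)]]
    exact prod_boole
  simp_rw [eval_eq, hmon, mul_ite, mul_one, mul_zero, ← sum_filter, multilinearCoeff]
  rw [← sum_fiberwise_of_maps_to (g := Finsupp.support) (t := U.powerset)
    fun m hm => mem_powerset.2 (mem_filter.1 hm).2]
  refine sum_congr rfl fun S hS => ?_
  rw [filter_filter]
  refine congrArg₂ _ (filter_congr fun m _ => ⟨And.right, fun hm => ?_⟩) rfl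
  exact ⟨hm ▸ mem_powerset.1 hS, hm⟩

theorem exists_mem_support_of_multilinearCoeff_ne_zero {P : MvPolynomial σ R} {S : Finset σ}
    (h : multilinearCoeff P S ≠ 0) : ∃ m ∈ P.support, m.support = S := by
  obtain ⟨m, hm, -⟩ := exists_ne_zero_of_sum_ne_zero h
  exact ⟨m, (mem_filter.1 hm).1, (mem_filter.1 hm).2⟩

theorem card_le_totalDegree_of_multilinearCoeff_ne_zero {P : MvPolynomial σ R} {S : Finset σ}
    (h : multilinearCoeff P S ≠ 0) : #S ≤ P.totalDegree := by
  obtain ⟨m, hm, rfl⟩ := exists_mem_support_of_multilinearCoeff_ne_zero h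
  exact (Finsupp.card_support_le_sum m).trans (le_totalDegree hm)

end MultilinearCoeff

section BooleanFunction
variable {ι : Type*} [Fintype ι] [DecidableEq ι]

theorem bval_injective : Function.Injective bval := by
  intro a b h
  cases a <;> cases b <;> simp_all [bval]

@[simps apply]
def indicatorEquiv : Finset ι ≃ (ι → Bool) where
  toFun U j := decide (j ∈ U)
  invFun x := {j | x j}
  left_inv U := by ext; simp
  right_inv x := by ext; simp

theorem bval_eq_sum_multilinearCoeff {f : (ι → Bool) → Bool} {P : MvPolynomial ι ℝ}
    (hP : ∀ x, eval (fun i => bval (x i)) P = bval (f x)) (U : Finset ι) :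
    bval (f (indicatorEquiv U)) = ∑ S ∈ U.powerset, multilinearCoeff P S := by
  rw [← hP, ← eval_indicator_eq_sum_multilinearCoeff]
  congr 2 with j
  simp [bval]

theorem flip1_indicatorEquiv {n : ℕ} (U : Finset (Fin n)) (i : Fin n) :
    flip1 (indicatorEquiv U) i = indicatorEquiv (U ∆ {i}) := by
  ext j
  by_cases h : j = i
  · subst h; simp [flip1, mem_symmDiff]
  · simp [flip1, mem_symmDiff, h]

theorem influence_eq_card {n : ℕ} (f : (Fin n → Bool) → Bool) {α : Type*} {φ : Bool → α}
    (hφ : Function.Injective φ) (i : Fin n) :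
    influence f i = #{U : Finset (Fin n) |
      φ (f (indicatorEquiv (U ∆ {i}))) ≠ φ (f (indicatorEquiv U))} / 2 ^ n := by
  rw [influence]
  congr 2
  refine card_equiv indicatorEquiv.symm fun x => ?_
  simp [hφ.ne_iff, ← flip1_indicatorEquiv]

end BooleanFunction

section MainBounds
variable {n : ℕ} {f : (Fin n → Bool) → Bool} {P : MvPolynomial (Fin n) ℝ}

theorem card_le_degI_of_multilinearCoeff_ne_zero {S : Finset (Fin n)}
    (h : multilinearCoeff P S ≠ 0) {i : Fin n} (hi : i ∈ S) : #S ≤ degI P i := by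
  obtain ⟨m, hm, rfl⟩ := exists_mem_support_of_multilinearCoeff_ne_zero h
  exact (Finsupp.card_support_le_sum m).trans
    (le_sup (f := fun m : Fin n →₀ ℕ => m.sum fun _ e => e)
      (mem_filter.2 ⟨hm, Finsupp.mem_support_iff.1 hi⟩))

theorem two_div_two_pow_degI_le_influence
    (hP : ∀ x, eval (fun i => bval (x i)) P = bval (f x)) {i : Fin n} (hi : Relevant f i) :
    2 / 2 ^ degI P i ≤ influence f i := by
  obtain ⟨x, hx⟩ := hi
  have hsens : ∃ U, bval (f (indicatorEquiv (U ∆ {i}))) ≠ bval (f (indicatorEquiv U)) :=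
    ⟨indicatorEquiv.symm x, by
      simpa [← flip1_indicatorEquiv, bval_injective.ne_iff] using hx⟩
  obtain ⟨T, hiT, hT, hcard⟩ :=
    exists_two_pow_le_mul_card_sensitive (bval_eq_sum_multilinearCoeff hP) hsens
  rw [influence_eq_card f bval_injective]
  rw [Fintype.card_fin] at hcard
  have hdeg := card_le_degI_of_multilinearCoeff_ne_zero hT hiT
  calc (2 : ℝ) / 2 ^ degI P i ≤ 2 / 2 ^ #T := by gcongr; norm_num
    _ = 2 ^ (n + 1) / 2 ^ #T / 2 ^ n := by field_simp; ring
    _ ≤ _ := by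
      gcongr
      rw [div_le_iff₀' (by positivity)]
      exact_mod_cast hcard

theorem sum_influence_le_totalDegree (hP : ∀ x, eval (fun i => bval (x i)) P = bval (f x)) :
    ∑ i, influence f i ≤ P.totalDegree := by
  set h : Finset (Fin n) → ℝ := fun U => 1 - 2 * bval (f (indicatorEquiv U))
  have hh : ∀ U, h U ^ 2 = 1 := fun U => by
    change (1 - 2 * bval _) ^ 2 = 1
    cases f (indicatorEquiv U) <;> norm_num [bval]
  have hmob : ∀ U, h U =
      ∑ T ∈ U.powerset, ((if T = ∅ then 1 else 0) - 2 * multilinearCoeff P T) := fun U => by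
    rw [sum_sub_distrib, sum_ite_eq' _ _ (fun _ => (1 : ℝ)), ← mul_sum,
      ← bval_eq_sum_multilinearCoeff hP]
    simp [h]
  have hdeg : ∀ S, P.totalDegree < #S → walshCoeff h S = 0 := fun S hS =>
    walshCoeff_eq_zero_of_card_lt hmob (fun T hT => by
      have hc : multilinearCoeff P T = 0 := by_contra fun hc =>
        (card_le_totalDegree_of_multilinearCoeff_ne_zero hc).not_gt hT
      rw [if_neg (card_pos.1 (pos_of_gt hT)).ne_empty, hc]
      ring) hS
  have := sum_card_sensitive_le hh hdeg
  have hinj : Function.Injective fun b => 1 - 2 * bval b := fun a b hab =>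
    bval_injective (by simpa using hab)
  rw [sum_congr rfl fun i _ => influence_eq_card f hinj i, ← sum_div,
    div_le_iff₀ (by positivity)]
  rwa [Fintype.card_fin] at this

end MainBounds

/-- `W(f) ≤ Inf[f]/2 ≤ deg(f)/2`. -/
theorem stmt_10 {n : ℕ} (f : (Fin n → Bool) → Bool) (P : MvPolynomial (Fin n) ℝ)
    (hP : Represents P f) :
    W P f ≤ (∑ i, influence f i) / 2 ∧
      (∑ i, influence f i) / 2 ≤ (P.totalDegree : ℝ) / 2 := by
  have hinf : ∀ i, 0 ≤ influence f i := fun i => by unfold influence; positivity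
  refine ⟨?_, by linarith [sum_influence_le_totalDegree hP.2]⟩
  calc W P f ≤ ∑ i ∈ relSet f, influence f i / 2 := sum_le_sum fun i hi => by
        have := two_div_two_pow_degI_le_influence hP.2 (mem_filter.1 hi).2
        rw [div_eq_mul_inv] at this
        linarith
    _ ≤ ∑ i, influence f i / 2 :=
        sum_le_sum_of_subset_of_nonneg (subset_univ _) fun i _ _ => by linarith [hinf i]
    _ = (∑ i, influence f i) / 2 := (sum_div ..).symm
end
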